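/- Let E be a real inner product space, let f, g : E → E be maps, let V : E → ℝ be defined by V(θ) = ½‖f(θ) − g(θ)‖², and assume V is differentiable with L-Lipschitz gradient. Let σ > 0, G ≥ 0, and let (θ_k)_{k≥0} be generated by θ_{k+1} = θ_k + η_k • d_k where each d_k satisfies ⟪∇V(θ_k), d_k⟫ ≤ −σ·V(θ_k) and ‖d_k‖ ≤ G, and the nonnegative step sizes satisfy ∑_k η_k = ∞ and ∑_k η_k² < ∞. Then lim_{k→∞} ‖f(θ_k) − g(θ_k)‖ = 0. -/

import Mathlib

/-!
Along a segment, `t ↦ V (x + t • u) - t ⟪∇V x, u⟫ - (L/2) ‖u‖² t²` is antitone, which gives the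
descent inequality `V (x + u) ≤ V x + ⟪∇V x, u⟫ + (L/2) ‖u‖²`. Combined with the Lyapunov
certificate it yields `V θ_{k+1} ≤ V θ_k - σ η_k V θ_k + (|L| G² / 2) η_k²`. Since `∑ η_k² < ∞`, the
Robbins–Siegmund argument shows that `V θ_k` converges and `∑ η_k V θ_k < ∞`; as `∑ η_k = ∞`, the
limit must be `0`, and `‖f θ_k - g θ_k‖ = √(2 V θ_k)`.
-/

open RealInnerProductSpace Filter Topology

section Descent

variable {E : Type*} [NormedAddCommGroup E] [InnerProductSpace ℝ E]
  {V : E → ℝ} {V' : E → E}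

theorem hasDerivAt_comp_add_smul
    (hV : ∀ θ, HasFDerivAt V (InnerProductSpace.toDualMap ℝ E (V' θ)) θ) (x u : E) (t : ℝ) :
    HasDerivAt (fun s : ℝ => V (x + s • u)) ⟪V' (x + t • u), u⟫ t := by
  have hline : HasDerivAt (fun s : ℝ => x + s • u) u t := by
    simpa using ((hasDerivAt_id t).smul_const u).const_add x
  exact (hV _).comp_hasDerivAt t hline

theorem le_add_inner_add_of_lipschitz_gradient
    (hV : ∀ θ, HasFDerivAt V (InnerProductSpace.toDualMap ℝ E (V' θ)) θ) {L : ℝ}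
    (hV' : ∀ a b, ‖V' a - V' b‖ ≤ L * ‖a - b‖) (x u : E) :
    V (x + u) ≤ V x + ⟪V' x, u⟫ + L / 2 * ‖u‖ ^ 2 := by
  let φ : ℝ → ℝ := fun t => V (x + t • u) - t * ⟪V' x, u⟫ - L / 2 * ‖u‖ ^ 2 * t ^ 2
  have hφ : ∀ t, HasDerivAt φ (⟪V' (x + t • u) - V' x, u⟫ - L * ‖u‖ ^ 2 * t) t := fun t => by
    have := ((hasDerivAt_comp_add_smul hV x u t).sub ((hasDerivAt_id t).mul_const ⟪V' x, u⟫)).sub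
      ((hasDerivAt_pow 2 t).const_mul (L / 2 * ‖u‖ ^ 2))
    exact this.congr_deriv (by rw [inner_sub_left]; norm_num; ring)
  have hφ'_nonpos : ∀ t, 0 ≤ t → ⟪V' (x + t • u) - V' x, u⟫ - L * ‖u‖ ^ 2 * t ≤ 0 := by
    intro t ht
    have : ⟪V' (x + t • u) - V' x, u⟫ ≤ L * ‖u‖ ^ 2 * t := calc
      _ ≤ ‖V' (x + t • u) - V' x‖ * ‖u‖ := real_inner_le_norm _ _
      _ ≤ L * ‖t • u‖ * ‖u‖ := by gcongr; simpa using hV' (x + t • u) x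
      _ = L * ‖u‖ ^ 2 * t := by rw [norm_smul, Real.norm_of_nonneg ht]; ring
    linarith
  have hanti : AntitoneOn φ (Set.Ici 0) :=
    antitoneOn_of_hasDerivWithinAt_nonpos (convex_Ici 0)
      (fun t _ => (hφ t).continuousAt.continuousWithinAt)
      (fun t _ => (hφ t).hasDerivWithinAt)
      (fun t ht => hφ'_nonpos t (le_of_lt (by simpa using ht)))
  have h10 : φ 1 ≤ φ 0 := hanti Set.self_mem_Ici (zero_le_one' ℝ) zero_le_one
  simp only [φ, one_smul, one_mul, one_pow, mul_one, zero_smul, add_zero, zero_mul, sub_zero,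
    zero_pow two_ne_zero, mul_zero] at h10
  linarith

theorem apply_add_smul_le_of_inner_le
    (hV : ∀ θ, HasFDerivAt V (InnerProductSpace.toDualMap ℝ E (V' θ)) θ) {L : ℝ}
    (hV' : ∀ a b, ‖V' a - V' b‖ ≤ L * ‖a - b‖) {x d : E} {σ G η : ℝ} (hη : 0 ≤ η)
    (hd : ⟪V' x, d⟫ ≤ -(σ * V x)) (hG : ‖d‖ ≤ G) :
    V (x + η • d) ≤ V x - σ * η * V x + |L| / 2 * G ^ 2 * η ^ 2 := calc
  V (x + η • d) ≤ V x + η * ⟪V' x, d⟫ + L / 2 * (η ^ 2 * ‖d‖ ^ 2) := by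
    simpa [real_inner_smul_right, norm_smul, abs_of_nonneg hη, mul_pow]
      using le_add_inner_add_of_lipschitz_gradient hV hV' x (η • d)
  _ ≤ V x + η * -(σ * V x) + |L| / 2 * (η ^ 2 * G ^ 2) := by
    gcongr
    exact le_abs_self L
  _ = V x - σ * η * V x + |L| / 2 * G ^ 2 * η ^ 2 := by ring

end Descent

section RobbinsSiegmund

variable {v a b : ℕ → ℝ}

theorem exists_tendsto_and_summable_of_succ_add_le (hv : ∀ k, 0 ≤ v k) (ha : ∀ k, 0 ≤ a k)
    (hb : Summable b) (hrec : ∀ k, v (k + 1) + a k ≤ v k + b k) :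
    (∃ ℓ, Tendsto v atTop (𝓝 ℓ)) ∧ Summable a := by
  set P : ℕ → ℝ := fun n => ∑ j ∈ Finset.range n, b j
  have hP : Tendsto P atTop (𝓝 (∑' j, b j)) := hb.hasSum.tendsto_sum_nat
  obtain ⟨m, hm⟩ := hP.bddAbove_range
  set W : ℕ → ℝ := fun k => v k - P k
  have hW : ∀ k, W (k + 1) + a k ≤ W k := fun k => by
    simp only [W, P, Finset.sum_range_succ]
    linarith [hrec k]
  have hW_anti : Antitone W := antitone_nat_of_succ_le fun k => by linarith [hW k, ha k]
  have hW_ge : ∀ k, -m ≤ W k := fun k => by linarith [hv k, hm ⟨k, rfl⟩]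
  refine ⟨⟨(⨅ k, W k) + ∑' j, b j, ?_⟩, summable_of_sum_range_le ha (c := W 0 + m) fun n => ?_⟩
  · simpa [W] using (tendsto_atTop_ciInf hW_anti ⟨-m, Set.forall_mem_range.2 hW_ge⟩).add hP
  · calc ∑ k ∈ Finset.range n, a k ≤ ∑ k ∈ Finset.range n, (W k - W (k + 1)) :=
          Finset.sum_le_sum fun k _ => by linarith [hW k]
      _ = W 0 - W n := Finset.sum_range_sub' W n
      _ ≤ W 0 + m := by linarith [hW_ge n]

end RobbinsSiegmund

theorem Summable.of_mul_of_tendsto_ne_zero {η v : ℕ → ℝ} {ℓ : ℝ}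
    (h : Summable fun k => η k * v k) (hv : Tendsto v atTop (𝓝 ℓ)) (hℓ : ℓ ≠ 0) :
    Summable η := by
  have hℓ' : 0 < ‖ℓ‖ / 2 := by positivity
  refine .of_norm_bounded_eventually_nat (h.norm.div_const (‖ℓ‖ / 2)) ?_
  filter_upwards [hv.norm.eventually (eventually_gt_nhds (half_lt_self (norm_pos_iff.2 hℓ)))]
    with k hk
  rw [le_div_iff₀ hℓ', norm_mul]
  gcongr

theorem tendsto_zero_of_succ_le_sub_mul_add {v η b : ℕ → ℝ} {σ : ℝ} (hσ : 0 < σ)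
    (hv : ∀ k, 0 ≤ v k) (hη : ∀ k, 0 ≤ η k) (hdiv : ¬ Summable η) (hb : Summable b)
    (hrec : ∀ k, v (k + 1) ≤ v k - σ * η k * v k + b k) :
    Tendsto v atTop (𝓝 0) := by
  obtain ⟨⟨ℓ, hℓ⟩, hsum⟩ := exists_tendsto_and_summable_of_succ_add_le hv
    (a := fun k => σ * (η k * v k)) (fun k => by have := hv k; have := hη k; positivity) hb
    (fun k => by linarith [hrec k])
  obtain rfl : ℓ = 0 := by_contra fun h =>
    hdiv (((summable_mul_left_iff hσ.ne').1 hsum).of_mul_of_tendsto_ne_zero hℓ h)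
  exact hℓ

theorem halypo_theorem2_general
    {E : Type*} [NormedAddCommGroup E] [InnerProductSpace ℝ E]
    (f g : E → E) (V : E → ℝ)
    (hVdef : ∀ θ : E, V θ = (1 / 2 : ℝ) * ‖f θ - g θ‖ ^ 2)
    (V' : E → E) (L : ℝ)
    (hdiff : ∀ θ : E, HasFDerivAt V (InnerProductSpace.toDualMap ℝ E (V' θ)) θ)
    (hlip : ∀ θ₁ θ₂ : E, ‖V' θ₁ - V' θ₂‖ ≤ L * ‖θ₁ - θ₂‖)
    (σ : ℝ) (hσ : 0 < σ) (G : ℝ)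
    (θ : ℕ → E) (d : ℕ → E) (η : ℕ → ℝ) (hη : ∀ k, 0 ≤ η k)
    (hupd : ∀ k, θ (k + 1) = θ k + η k • d k)
    (hcert : ∀ k, ⟪V' (θ k), d k⟫ ≤ -(σ * V (θ k)))
    (hbnd : ∀ k, ‖d k‖ ≤ G)
    (hdiv : ¬ Summable η) (hη2 : Summable (fun k => (η k) ^ 2)) :
    Filter.Tendsto (fun k => ‖f (θ k) - g (θ k)‖) Filter.atTop (nhds 0) := by
  have hV_nonneg : ∀ x, 0 ≤ V x := fun x => by rw [hVdef]; positivity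
  have hV : Tendsto (fun k => V (θ k)) atTop (𝓝 0) :=
    tendsto_zero_of_succ_le_sub_mul_add hσ (fun k => hV_nonneg _) hη hdiv
      (hη2.mul_left (|L| / 2 * G ^ 2)) fun k => by
        rw [hupd]
        exact apply_add_smul_le_of_inner_le hdiff hlip (hη k) (hcert k) (hbnd k)
  have hnorm : ∀ x, ‖f x - g x‖ = √(2 * V x) := fun x => by
    rw [hVdef, ← mul_assoc, mul_one_div_cancel two_ne_zero, one_mul, Real.sqrt_sq (norm_nonneg _)]
  simpa [hnorm] using (hV.const_mul 2).sqrt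

/-- Theorem 2 (convergence to the synergy manifold): with
`V(θ) = ½‖f(θ) - g(θ)‖²` differentiable with `L`-Lipschitz gradient, if the
iterates `θ_{k+1} = θ_k + η_k • d_k` use directions satisfying the Lyapunov
certificate `⟪∇V(θ_k), d_k⟫ ≤ -σ·V(θ_k)` with `‖d_k‖ ≤ G`, and the
nonnegative step sizes satisfy the Robbins–Monro conditions, then the
rationality gap vanishes: `‖f(θ_k) - g(θ_k)‖ → 0`. -/
theorem halypo_theorem2
    {E : Type*} [NormedAddCommGroup E] [InnerProductSpace ℝ E]
    (f g : E → E) (V : E → ℝ)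
    (hVdef : ∀ θ : E, V θ = (1 / 2 : ℝ) * ‖f θ - g θ‖ ^ 2)
    (V' : E → E) (L : ℝ)
    (hdiff : ∀ θ : E, HasFDerivAt V (InnerProductSpace.toDualMap ℝ E (V' θ)) θ)
    (hlip : ∀ θ₁ θ₂ : E, ‖V' θ₁ - V' θ₂‖ ≤ L * ‖θ₁ - θ₂‖)
    (σ : ℝ) (hσ : 0 < σ) (G : ℝ) (hG : 0 ≤ G)
    (θ : ℕ → E) (d : ℕ → E) (η : ℕ → ℝ) (hη : ∀ k, 0 ≤ η k)
    (hupd : ∀ k, θ (k + 1) = θ k + η k • d k)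
    (hcert : ∀ k, ⟪V' (θ k), d k⟫ ≤ -(σ * V (θ k)))
    (hbnd : ∀ k, ‖d k‖ ≤ G)
    (hdiv : ¬ Summable η) (hη2 : Summable (fun k => (η k) ^ 2)) :
    Filter.Tendsto (fun k => ‖f (θ k) - g (θ k)‖) Filter.atTop (nhds 0) :=
  halypo_theorem2_general f g V hVdef V' L hdiff hlip σ hσ G θ d η hη hupd hcert hbnd hdiv hη2
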